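/- arXiv:2411.18426 — 7 statements merged into one kernel-verified Lean document; each statement's English description precedes it below -/
import Mathlib

section
/- Let m ≥ 2 and n, k be positive integers with n ≥ 2k. If F_1, F_2, ..., F_m ⊆ binom([n],k) are non-empty cross-intersecting families, then Σ_{j=1}^m |F_j| ≤ max{ m·C(n−1, k−1) , C(n,k) − C(n−k, k) + m − 1 }. -/
/-
Let `F i` be a largest family and `F j` a largest one among the others. Then
`∑ |F l| ≤ |F i| + (m - 1) |F j|`, so it suffices to bound `|F| + c |G|` for a cross-intersecting
pair of `k`-uniform families with `0 < |G| ≤ |F|`. The `(n - 2k)`-th shadow of the complements of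
the members of `G` is disjoint from `F`, so `|F| ≤ C(n, k) - |∂^(n-2k) Gᶜ|`. If
`|G| ≥ C(n-1, k-1)`, Lovász's form of Kruskal–Katona gives `|G| ≤ |F| ≤ C(n-1, k-1)`. Otherwise
`|G| = C(M, n-k) + h` with `0 ≤ h < C(M, n-k-1)` and `n - k ≤ M < n - 1`, and Kruskal–Katona
bounds the shadow below by `C(M, k) + q` with `q ≥ h C(M, k-1) / C(M, n-k-1)`. The resulting bound
on `|F| + c |G|` lies below the chord between the values at `N = M` and `N = M + 1` of
`C(n, k) - C(N, k) + c C(N, n-k)`, a sequence whose increments change sign at most once; so it is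
at most the larger of the values at `N = n - k` and `N = n - 1`, the two terms of the max.
-/

open Finset
open scoped FinsetFamily

theorem le_max_of_forall_le_succ_imp_le_succ {β : Type*} [LinearOrder β] {u : ℕ → β} {a b M : ℕ}
    (hu : ∀ N, a ≤ N → u N ≤ u (N + 1) → u (N + 1) ≤ u (N + 2))
    (haM : a ≤ M) (hMb : M ≤ b) : u M ≤ max (u a) (u b) := by
  by_cases hM : u M ≤ u (M + 1)
  · refine le_max_of_le_right
      (Nat.rel_of_forall_rel_succ_of_le_of_le (· ≤ ·) (fun N hN => ?_) le_rfl hMb)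
    induction N, hN using Nat.le_induction with
    | base => exact hM
    | succ N hMN ih => exact hu N (haM.trans hMN) ih
  · clear hMb
    refine le_max_of_le_left ?_
    induction M, haM using Nat.le_induction with
    | base => exact le_rfl
    | succ M haM ih =>
      have hM' : ¬ u M ≤ u (M + 1) := fun h => hM (hu M haM h)
      exact (lt_of_not_ge hM').le.trans (ih hM')

theorem exists_le_lt_succ_of_le_of_lt {β : Type*} [LinearOrder β] {s : ℕ → β} {a b : ℕ} {g : β}
    (hab : a ≤ b) (ha : s a ≤ g) (hb : g < s b) : ∃ M, a ≤ M ∧ M < b ∧ s M ≤ g ∧ g < s (M + 1) := by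
  induction b, hab using Nat.le_induction with
  | base => exact absurd hb (not_lt.2 ha)
  | succ b hab ih =>
    by_cases hsb : s b ≤ g
    · exact ⟨b, hab, b.lt_succ_self, hsb, hb⟩
    · obtain ⟨M, haM, hMb, hM⟩ := ih (lt_of_not_ge hsb)
      exact ⟨M, haM, hMb.trans b.lt_succ_self, hM⟩

namespace Nat

theorem choose_succ_mul_choose_le {N a b : ℕ} (hab : a ≤ b) (hbN : b ≤ N) :
    (N + 1).choose a * N.choose b ≤ N.choose a * (N + 1).choose b := by
  refine Nat.le_of_mul_le_mul_right ?_ (by omega : 0 < N + 1 - b)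
  calc (N + 1).choose a * N.choose b * (N + 1 - b)
      ≤ (N + 1).choose a * N.choose b * (N + 1 - a) := Nat.mul_le_mul_left _ (by omega)
    _ = N.choose a * (N + 1) * N.choose b := by rw [choose_mul_succ_eq]; ring
    _ = N.choose a * (N.choose b * (N + 1)) := by ring
    _ = N.choose a * (N + 1).choose b * (N + 1 - b) := by rw [choose_mul_succ_eq]; ring

theorem choose_succ_le_mul_choose_succ {N a b c : ℕ} (hab : a ≤ b) (hbN : b ≤ N)
    (h : N.choose a ≤ c * N.choose b) : (N + 1).choose a ≤ c * (N + 1).choose b := by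
  refine Nat.le_of_mul_le_mul_right ?_ (choose_pos hbN)
  calc (N + 1).choose a * N.choose b ≤ N.choose a * (N + 1).choose b :=
        choose_succ_mul_choose_le hab hbN
    _ ≤ c * N.choose b * (N + 1).choose b := Nat.mul_le_mul_right _ h
    _ = c * (N + 1).choose b * N.choose b := by ring

end Nat

theorem mul_sub_le_max_zero {c h q w D : ℤ} (hh : 0 ≤ h) (hw : 0 < w) (hhw : h ≤ w)
    (hq : h * D ≤ q * w) : c * h - q ≤ max 0 (c * w - D) := by
  rcases le_total D (c * w) with hD | hD
  · refine le_max_of_le_right (le_of_mul_le_mul_right ?_ hw)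
    nlinarith [mul_le_mul_of_nonneg_right hhw (sub_nonneg.2 hD)]
  · refine le_max_of_le_left (nonpos_of_mul_nonpos_left ?_ hw)
    nlinarith [mul_le_mul_of_nonneg_left hD hh]

theorem choose_interpolation_le_max {c k r M N h q : ℕ} (hk : 1 ≤ k) (hkr : k ≤ r)
    (hrM : r ≤ M) (hMN : M < N) (hh : h ≤ M.choose (r - 1))
    (hq : h * M.choose (k - 1) ≤ q * M.choose (r - 1)) :
    (c * (M.choose r + h) - M.choose k - q : ℤ) ≤
      max ((c : ℤ) - r.choose k) (c * N.choose r - N.choose k) := by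
  set u : ℕ → ℤ := fun N => c * N.choose r - N.choose k with hu_def
  have hsucc : ∀ N, u (N + 1) = u N + (c * N.choose (r - 1) - N.choose (k - 1)) := fun N => by
    simp only [hu_def, Nat.choose_succ_left N r (by omega), Nat.choose_succ_left N k (by omega)]
    push_cast; ring
  have hpersist : ∀ N, r ≤ N → u N ≤ u (N + 1) → u (N + 1) ≤ u (N + 2) := fun N hN h => by
    have hN : N.choose (k - 1) ≤ c * N.choose (r - 1) := by
      have := hsucc N
      zify; linarith
    have hN1 : ((N + 1).choose (k - 1) : ℤ) ≤ c * (N + 1).choose (r - 1) := by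
      exact_mod_cast Nat.choose_succ_le_mul_choose_succ (by omega) (by omega) hN
    linarith [hsucc (N + 1)]
  have hseg : u M + (c * h - q) ≤ max (u M) (u (M + 1)) :=
    calc u M + (c * h - q)
        ≤ u M + max (0 : ℤ) (c * M.choose (r - 1) - M.choose (k - 1)) :=
          add_le_add_right (mul_sub_le_max_zero (c := c) (h := h) (q := q) (w := M.choose (r - 1))
            (D := M.choose (k - 1)) (by positivity)
            (by exact_mod_cast Nat.choose_pos (by omega)) (by exact_mod_cast hh)
            (by exact_mod_cast hq)) _
      _ = max (u M) (u (M + 1)) := by rw [hsucc, ← max_add_add_left, add_zero]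
  have hends : max (u M) (u (M + 1)) ≤ max (u r) (u N) :=
    max_le (le_max_of_forall_le_succ_imp_le_succ hpersist hrM hMN.le)
      (le_max_of_forall_le_succ_imp_le_succ hpersist (by omega) hMN)
  have hur : u r = c - r.choose k := by simp [hu_def]
  rw [← hur]
  calc (c * (M.choose r + h) - M.choose k - q : ℤ)
      = u M + (c * h - q) := by simp only [hu_def]; ring
    _ ≤ max (u r) (u N) := hseg.trans hends

namespace Finset

section Shadow
variable {α β : Type*} [DecidableEq α] [DecidableEq β]

theorem shadow_map (f : α ↪ β) (𝒜 : Finset (Finset α)) :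
    ∂ (𝒜.map (mapEmbedding f).toEmbedding) = (∂ 𝒜).map (mapEmbedding f).toEmbedding := by
  ext t
  simp only [mem_shadow_iff, mem_map, RelEmbedding.coe_toEmbedding, mapEmbedding_apply]
  constructor
  · rintro ⟨_, ⟨A, hA, rfl⟩, _, hx, rfl⟩
    obtain ⟨a, ha, rfl⟩ := mem_map.1 hx
    exact ⟨A.erase a, ⟨A, hA, a, ha, rfl⟩, map_erase f A a⟩
  · rintro ⟨_, ⟨A, hA, a, ha, rfl⟩, rfl⟩
    exact ⟨A.map f, ⟨A, hA, rfl⟩, f a, mem_map_of_mem f ha, (map_erase f A a).symm⟩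

theorem shadow_iterate_map (f : α ↪ β) (𝒜 : Finset (Finset α)) (i : ℕ) :
    ∂^[i] (𝒜.map (mapEmbedding f).toEmbedding) = (∂^[i] 𝒜).map (mapEmbedding f).toEmbedding :=
  (Function.Semiconj.iterate_right (f := fun 𝒜 => 𝒜.map (mapEmbedding f).toEmbedding)
    (fun 𝒜 => (shadow_map f 𝒜).symm) i 𝒜).symm

theorem shadow_iterate_subset_of_shadow_subset {Φ : Finset (Finset α) → Finset (Finset β)}
    (hΦ : ∀ 𝒜, ∂ (Φ 𝒜) ⊆ Φ (∂ 𝒜)) (𝒜 : Finset (Finset α)) (i : ℕ) :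
    ∂^[i] (Φ 𝒜) ⊆ Φ (∂^[i] 𝒜) := by
  induction i with
  | zero => exact subset_rfl
  | succ i ih =>
    rw [Function.iterate_succ_apply', Function.iterate_succ_apply']
    exact (shadow_monotone ih).trans (hΦ _)

theorem shadow_nonMemberSubfamily_subset (a : α) (𝒜 : Finset (Finset α)) :
    ∂ (𝒜.nonMemberSubfamily a) ⊆ (∂ 𝒜).nonMemberSubfamily a := by
  intro t ht
  obtain ⟨s, hs, x, hx, rfl⟩ := mem_shadow_iff.1 ht
  rw [mem_nonMemberSubfamily] at hs ⊢
  exact ⟨erase_mem_shadow hs.1 hx, fun ha => hs.2 (mem_of_mem_erase ha)⟩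

theorem shadow_memberSubfamily_subset (a : α) (𝒜 : Finset (Finset α)) :
    ∂ (𝒜.memberSubfamily a) ⊆ (∂ 𝒜).memberSubfamily a := by
  intro t ht
  obtain ⟨s, hs, x, hx, rfl⟩ := mem_shadow_iff.1 ht
  rw [mem_memberSubfamily] at hs ⊢
  have hxa : a ≠ x := fun h => hs.2 (h ▸ hx)
  refine ⟨?_, fun ha => hs.2 (mem_of_mem_erase ha)⟩
  rw [← erase_insert_of_ne hxa]
  exact erase_mem_shadow hs.1 (mem_insert_of_mem hx)

theorem card_shadow_iterate_memberSubfamily_add_nonMemberSubfamily_le (a : α)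
    (𝒜 : Finset (Finset α)) (i : ℕ) :
    #(∂^[i] (𝒜.memberSubfamily a)) + #(∂^[i] (𝒜.nonMemberSubfamily a)) ≤ #(∂^[i] 𝒜) := by
  rw [← card_memberSubfamily_add_card_nonMemberSubfamily a (∂^[i] 𝒜)]
  exact add_le_add
    (card_le_card (shadow_iterate_subset_of_shadow_subset (shadow_memberSubfamily_subset a) 𝒜 i))
    (card_le_card (shadow_iterate_subset_of_shadow_subset (shadow_nonMemberSubfamily_subset a) 𝒜 i))

theorem card_div_choose_le_card_shadow_iterate_div_choose [Fintype α] {𝒜 : Finset (Finset α)}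
    {r i : ℕ} (h𝒜 : (𝒜 : Set (Finset α)).Sized r) (hi : i ≤ r) :
    (#𝒜 : ℚ) / (Fintype.card α).choose r ≤
      #(∂^[i] 𝒜) / (Fintype.card α).choose (r - i) := by
  induction i with
  | zero => simp
  | succ i ih =>
    refine (ih (by omega)).trans ?_
    rw [Function.iterate_succ_apply', ← Nat.sub_sub]
    exact local_lubell_yamamoto_meshalkin_inequality_div (by omega) h𝒜.shadow_iterate

theorem card_mul_choose_le_card_shadow_iterate_mul_choose [Fintype α] {𝒜 : Finset (Finset α)}
    {r i : ℕ} (h𝒜 : (𝒜 : Set (Finset α)).Sized r) (hi : i ≤ r) (hr : r ≤ Fintype.card α) :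
    #𝒜 * (Fintype.card α).choose (r - i) ≤ #(∂^[i] 𝒜) * (Fintype.card α).choose r := by
  have h := card_div_choose_le_card_shadow_iterate_div_choose h𝒜 hi
  rw [div_le_div_iff₀ (by exact_mod_cast Nat.choose_pos hr)
    (by exact_mod_cast Nat.choose_pos (by omega))] at h
  exact_mod_cast h

theorem card_mul_choose_le_card_shadow_iterate_mul_choose_of_subset {s : Finset α}
    {𝒜 : Finset (Finset α)} {r i : ℕ} (h𝒜 : 𝒜 ⊆ s.powersetCard r) (hi : i ≤ r) (hr : r ≤ #s) :
    #𝒜 * (#s).choose (r - i) ≤ #(∂^[i] 𝒜) * (#s).choose r := by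
  rw [← attach_map_val (s := s), powersetCard_map, subset_map_iff] at h𝒜
  obtain ⟨𝒜', h𝒜', rfl⟩ := h𝒜
  have hsized : (𝒜' : Set (Finset s)).Sized r := fun A hA => (mem_powersetCard.1 (h𝒜' hA)).2
  have := card_mul_choose_le_card_shadow_iterate_mul_choose hsized hi (by simpa using hr)
  rw [shadow_iterate_map, card_map, card_map]
  simpa using this

end Shadow

section Interval
variable {α : Type*} [LinearOrder α] [LocallyFiniteOrderBot α] {𝒞 : Finset (Finset α)} {a : α}
  {r : ℕ}

theorem nonMemberSubfamily_eq_powersetCard_Iio (hlow : (Iio a).powersetCard r ⊆ 𝒞)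
    (hhigh : 𝒞 ⊆ (Iic a).powersetCard r) : 𝒞.nonMemberSubfamily a = (Iio a).powersetCard r := by
  ext s
  rw [mem_nonMemberSubfamily]
  refine ⟨fun ⟨hs, has⟩ => ?_, fun hs => ⟨hlow hs, fun has => ?_⟩⟩
  · obtain ⟨hsa, hsr⟩ := mem_powersetCard.1 (hhigh hs)
    exact mem_powersetCard.2 ⟨Iic_erase a ▸ subset_erase.2 ⟨hsa, has⟩, hsr⟩
  · exact lt_irrefl a (mem_Iio.1 ((mem_powersetCard.1 hs).1 has))

theorem memberSubfamily_subset_powersetCard_Iio (hhigh : 𝒞 ⊆ (Iic a).powersetCard r) :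
    𝒞.memberSubfamily a ⊆ (Iio a).powersetCard (r - 1) := fun s hs => by
  obtain ⟨hs, has⟩ := mem_memberSubfamily.1 hs
  obtain ⟨hsa, hsr⟩ := mem_powersetCard.1 (hhigh hs)
  rw [card_insert_of_notMem has] at hsr
  exact mem_powersetCard.2
    ⟨Iic_erase a ▸ subset_erase.2 ⟨(subset_insert a s).trans hsa, has⟩, by omega⟩

end Interval

namespace Colex
variable {α : Type*} [LinearOrder α] {𝒜 ℬ : Finset (Finset α)} {r : ℕ}

theorem IsInitSeg.subset_of_card_le (h𝒜 : IsInitSeg 𝒜 r) (hℬ : IsInitSeg ℬ r)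
    (hcard : #𝒜 ≤ #ℬ) : 𝒜 ⊆ ℬ :=
  (h𝒜.total hℬ).elim id fun h => (eq_of_subset_of_card_le h hcard).ge

theorem isInitSeg_powersetCard_Iio [LocallyFiniteOrderBot α] (a : α) (r : ℕ) :
    IsInitSeg ((Iio a).powersetCard r) r := by
  refine ⟨Set.sized_powersetCard _ _, fun s t hs ⟨hts, htr⟩ => mem_powersetCard.2 ⟨?_, htr⟩⟩
  intro b hb
  exact mem_Iio.2
    (forall_lt_mono hts.le (fun c hc => mem_Iio.1 ((mem_powersetCard.1 hs).1 hc)) b hb)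

theorem isInitSeg_powersetCard_Iic [LocallyFiniteOrderBot α] (a : α) (r : ℕ) :
    IsInitSeg ((Iic a).powersetCard r) r := by
  refine ⟨Set.sized_powersetCard _ _, fun s t hs ⟨hts, htr⟩ => mem_powersetCard.2 ⟨?_, htr⟩⟩
  intro b hb
  exact mem_Iic.2
    (forall_le_mono hts.le (fun c hc => mem_Iic.1 ((mem_powersetCard.1 hs).1 hc)) b hb)

theorem exists_isInitSeg_card [Fintype α] {h : ℕ} (hh : h ≤ (Fintype.card α).choose r) :
    ∃ 𝒞 : Finset (Finset α), IsInitSeg 𝒞 r ∧ #𝒞 = h := by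
  induction h with
  | zero => exact ⟨∅, isInitSeg_empty, rfl⟩
  | succ h ih =>
    obtain ⟨𝒞, h𝒞, rfl⟩ := ih (by omega)
    have hrest : (powersetCard r univ \ 𝒞).Nonempty := by
      rw [← card_pos, card_sdiff_of_subset (subset_powersetCard_univ_iff.2 h𝒞.1),
        card_powersetCard, card_univ]
      omega
    obtain ⟨B, hB, hBmin⟩ := exists_min_image _ toColex hrest
    obtain ⟨hBr, hB𝒞⟩ := mem_sdiff.1 hB
    refine ⟨insert B 𝒞, ⟨?_, fun s t hs ⟨hts, htr⟩ => ?_⟩, card_insert_of_notMem hB𝒞⟩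
    · intro C hC
      obtain rfl | hC := mem_insert.1 hC
      exacts [(mem_powersetCard.1 hBr).2, h𝒞.1 hC]
    · refine mem_insert_of_mem ?_
      obtain rfl | hs := mem_insert.1 hs
      · by_contra ht
        exact (hBmin t (mem_sdiff.2 ⟨mem_powersetCard.2 ⟨subset_univ _, htr⟩, ht⟩)).not_gt hts
      · exact h𝒞.2 hs ⟨hts, htr⟩

end Colex

/-- The colex initial segment `𝒞` with `|𝒞| = C(M, r) + h` consists of all `r`-subsets of `[0, M)`
and of `{M} ∪ D` for `h` sets `D` of a family of `(r - 1)`-subsets of `[0, M)`: Lovász's bound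
applies to the first part and local LYM to the link. -/
theorem exists_add_le_card_shadow_iterate {n r M h i : ℕ} {𝒜 : Finset (Finset (Fin n))}
    (h𝒜 : (𝒜 : Set (Finset (Fin n))).Sized r) (hi : i < r) (hrM : r ≤ M) (hMn : M < n)
    (hh : h ≤ M.choose (r - 1)) (hcard : M.choose r + h ≤ #𝒜) :
    ∃ q, M.choose (r - i) + q ≤ #(∂^[i] 𝒜) ∧
      h * M.choose (r - 1 - i) ≤ q * M.choose (r - 1) := by
  set a : Fin n := ⟨M, hMn⟩
  have hIio : #(Iio a) = M := Fin.card_Iio a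
  have hIic : #(Iic a) = M + 1 := Fin.card_Iic a
  have hsucc : (M + 1).choose r = M.choose (r - 1) + M.choose r :=
    Nat.choose_succ_left M r (by omega)
  have hsize : M.choose r + h ≤ (Fintype.card (Fin n)).choose r := by
    rw [Fintype.card_fin]
    exact (by omega : M.choose r + h ≤ (M + 1).choose r).trans (Nat.choose_le_choose r hMn)
  obtain ⟨𝒞, h𝒞, h𝒞card⟩ := Colex.exists_isInitSeg_card hsize
  have hlow : (Iio a).powersetCard r ⊆ 𝒞 :=
    (Colex.isInitSeg_powersetCard_Iio a r).subset_of_card_le h𝒞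
      (by rw [card_powersetCard, hIio, h𝒞card]; omega)
  have hhigh : 𝒞 ⊆ (Iic a).powersetCard r :=
    h𝒞.subset_of_card_le (Colex.isInitSeg_powersetCard_Iic a r)
      (by rw [card_powersetCard, hIic, h𝒞card]; omega)
  have hnon := nonMemberSubfamily_eq_powersetCard_Iio hlow hhigh
  have hmem_card : h ≤ #(𝒞.memberSubfamily a) := by
    have := card_memberSubfamily_add_card_nonMemberSubfamily a 𝒞
    rw [hnon, card_powersetCard, hIio] at this
    omega
  have hnon_shadow : M.choose (r - i) ≤ #(∂^[i] (𝒞.nonMemberSubfamily a)) :=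
    kruskal_katona_lovasz_form hi.le hrM hMn.le (hnon ▸ Set.sized_powersetCard _ _)
      (by rw [hnon, card_powersetCard, hIio])
  have hlym := card_mul_choose_le_card_shadow_iterate_mul_choose_of_subset
    (memberSubfamily_subset_powersetCard_Iio hhigh) (by omega : i ≤ r - 1) (by omega)
  rw [hIio] at hlym
  refine ⟨#(∂^[i] (𝒞.memberSubfamily a)), ?_, (Nat.mul_le_mul_right _ hmem_card).trans hlym⟩
  calc M.choose (r - i) + #(∂^[i] (𝒞.memberSubfamily a))
      ≤ #(∂^[i] 𝒞) := by
        have := card_shadow_iterate_memberSubfamily_add_nonMemberSubfamily_le a 𝒞 i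
        omega
    _ ≤ #(∂^[i] 𝒜) := iterated_kk h𝒜 (h𝒞card ▸ hcard) h𝒞

theorem card_add_card_shadow_iterate_compls_le {n k : ℕ} (hn : 2 * k ≤ n)
    {F G : Finset (Finset (Fin n))}
    (hF : (F : Set (Finset (Fin n))).Sized k) (hG : (G : Set (Finset (Fin n))).Sized k)
    (hcross : ∀ A ∈ F, ∀ B ∈ G, (A ∩ B).Nonempty) :
    #F + #(∂^[n - 2 * k] Gᶜˢ) ≤ n.choose k := by
  have hsized : ((∂^[n - 2 * k] Gᶜˢ : Finset (Finset (Fin n))) : Set (Finset (Fin n))).Sized k := by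
    have := hG.compls.shadow_iterate (k := n - 2 * k)
    rwa [Fintype.card_fin, show n - k - (n - 2 * k) = k by omega] at this
  have hdisj : Disjoint F (∂^[n - 2 * k] Gᶜˢ) := by
    refine disjoint_right.2 fun A hA hAF => ?_
    obtain ⟨C, hC, hAC, -⟩ := mem_shadow_iterate_iff_exists_sdiff.1 hA
    obtain ⟨x, hx⟩ := hcross A hAF Cᶜ (mem_compls.1 hC)
    exact mem_compl.1 (mem_inter.1 hx).2 (hAC (mem_inter.1 hx).1)
  have hunion : ((F ∪ ∂^[n - 2 * k] Gᶜˢ : Finset _) : Set (Finset (Fin n))).Sized k := by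
    rw [coe_union]
    exact Set.sized_union.2 ⟨hF, hsized⟩
  rw [← card_union_of_disjoint hdisj]
  simpa using hunion.card_le

end Finset

theorem card_add_mul_card_le_max_of_cross_intersecting {n k c : ℕ} (hk : 1 ≤ k) (hn : 2 * k ≤ n)
    {F G : Finset (Finset (Fin n))}
    (hF : (F : Set (Finset (Fin n))).Sized k) (hG : (G : Set (Finset (Fin n))).Sized k)
    (hGF : #G ≤ #F) (hGne : G.Nonempty) (hcross : ∀ A ∈ F, ∀ B ∈ G, (A ∩ B).Nonempty) :
    #F + c * #G ≤
      max ((c + 1) * (n - 1).choose (k - 1)) (n.choose k - (n - k).choose k + c) := by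
  set r := n - k
  have hH : ((Gᶜˢ : Finset (Finset (Fin n))) : Set (Finset (Fin n))).Sized r := by
    simpa using hG.compls
  have hbase := card_add_card_shadow_iterate_compls_le hn hF hG hcross
  have hpascal : n.choose k = (n - 1).choose (k - 1) + (n - 1).choose k := by
    rw [← Nat.choose_succ_left (n - 1) k hk, Nat.sub_add_cancel (by omega)]
  have hsymm : (n - 1).choose r = (n - 1).choose (k - 1) := by
    rw [show r = n - 1 - (k - 1) by omega, Nat.choose_symm (by omega)]
  by_cases hlarge : (n - 1).choose (k - 1) ≤ #G
  · have hlov := kruskal_katona_lovasz_form (i := n - 2 * k) (by omega) (by omega : r ≤ n - 1)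
      (by omega) hH (by rw [card_compls, hsymm]; exact hlarge)
    rw [show r - (n - 2 * k) = k by omega] at hlov
    have hFα : #F ≤ (n - 1).choose (k - 1) := by omega
    refine le_max_of_le_left ?_
    calc #F + c * #G ≤ (n - 1).choose (k - 1) + c * (n - 1).choose (k - 1) :=
          add_le_add hFα (Nat.mul_le_mul_left c (hGF.trans hFα))
      _ = (c + 1) * (n - 1).choose (k - 1) := by ring
  · rw [not_le] at hlarge
    obtain ⟨M, hrM, hMn, hMg, hgM⟩ := exists_le_lt_succ_of_le_of_lt (s := fun N => N.choose r)
      (by omega : r ≤ n - 1) (by simpa using card_pos.2 hGne) (hsymm ▸ hlarge)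
    have hsucc : (M + 1).choose r = M.choose (r - 1) + M.choose r :=
      Nat.choose_succ_left M r (by omega)
    obtain ⟨q, hq, hqlym⟩ := exists_add_le_card_shadow_iterate (h := #G - M.choose r) hH
      (by omega : n - 2 * k < r) hrM (by omega) (by omega) (by rw [card_compls]; omega)
    rw [show r - (n - 2 * k) = k by omega] at hq
    rw [show r - 1 - (n - 2 * k) = k - 1 by omega] at hqlym
    have harith := choose_interpolation_le_max (c := c) hk (by omega) hrM hMn (by omega) hqlym
    have hG_sub : ((#G - M.choose r : ℕ) : ℤ) = #G - M.choose r := Nat.cast_sub hMg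
    have hrn : r.choose k ≤ n.choose k := Nat.choose_le_choose k (by omega)
    rw [hG_sub, hsymm] at harith
    rcases le_max_iff.1 harith with h | h
    · refine le_max_of_le_right ?_
      zify [hrn] at hbase hq ⊢
      linarith
    · refine le_max_of_le_left ?_
      zify at hbase hq hpascal ⊢
      linarith

theorem exists_ne_sum_le_add_mul {ι : Type*} [Fintype ι] [DecidableEq ι] (f : ι → ℕ)
    (hι : 2 ≤ Fintype.card ι) :
    ∃ i j, j ≠ i ∧ f j ≤ f i ∧ ∑ x, f x ≤ f i + (Fintype.card ι - 1) * f j := by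
  have hne : (univ : Finset ι).Nonempty := card_pos.1 (by rw [card_univ]; omega)
  obtain ⟨i, -, hi⟩ := exists_max_image univ f hne
  have hne' : (univ.erase i).Nonempty :=
    card_pos.1 (by rw [card_erase_of_mem (mem_univ i), card_univ]; omega)
  obtain ⟨j, hj, hjmax⟩ := exists_max_image (univ.erase i) f hne'
  refine ⟨i, j, ne_of_mem_erase hj, hi j (mem_univ j), ?_⟩
  rw [← add_sum_erase _ _ (mem_univ i)]
  refine add_le_add_right ((sum_le_card_nsmul _ _ _ hjmax).trans_eq ?_) _
  rw [card_erase_of_mem (mem_univ i), card_univ, smul_eq_mul]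

theorem card_add_mul_card_le_max_of_cross_intersecting_Icc {n k c : ℕ} (hk : 1 ≤ k)
    (hn : 2 * k ≤ n) {F G : Finset (Finset ℕ)}
    (hF : F ⊆ (Icc 1 n).powersetCard k) (hG : G ⊆ (Icc 1 n).powersetCard k)
    (hGF : #G ≤ #F) (hGne : G.Nonempty) (hcross : ∀ A ∈ F, ∀ B ∈ G, (A ∩ B).Nonempty) :
    #F + c * #G ≤
      max ((c + 1) * (n - 1).choose (k - 1)) (n.choose k - (n - k).choose k + c) := by
  set e : Fin n ↪ ℕ := Fin.valEmbedding.trans (addRightEmbedding 1)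
  have he : (univ : Finset (Fin n)).map e = Icc 1 n := by
    ext x
    simp only [mem_map, mem_univ, true_and, mem_Icc]
    refine ⟨?_, fun hx => ⟨⟨x - 1, by omega⟩, by simp [e]; omega⟩⟩
    rintro ⟨a, rfl⟩
    simp [e]
  rw [← he, powersetCard_map, subset_map_iff] at hF hG
  obtain ⟨F, hF, rfl⟩ := hF
  obtain ⟨G, hG, rfl⟩ := hG
  simp only [card_map] at hGF ⊢
  refine card_add_mul_card_le_max_of_cross_intersecting hk hn
    (fun A hA => (mem_powersetCard.1 (hF hA)).2) (fun B hB => (mem_powersetCard.1 (hG hB)).2)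
    hGF (map_nonempty.1 hGne) fun A hA B hB => ?_
  have := hcross _ (mem_map_of_mem _ hA) _ (mem_map_of_mem _ hB)
  simpa only [RelEmbedding.coe_toEmbedding, mapEmbedding_apply, ← map_inter, map_nonempty]
    using this

theorem stmt3 (m n kk : ℕ) (hm : 2 ≤ m) (hk : 1 ≤ kk) (hn : 2 * kk ≤ n)
    (F : Fin m → Finset (Finset ℕ))
    (hF : ∀ i, F i ⊆ (Finset.Icc 1 n).powersetCard kk)
    (hFne : ∀ i, (F i).Nonempty)
    (hcross : ∀ i j, i ≠ j → ∀ A ∈ F i, ∀ B ∈ F j, (A ∩ B).Nonempty) :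
    ∑ j, (F j).card ≤
      max (m * Nat.choose (n - 1) (kk - 1))
        (Nat.choose n kk - Nat.choose (n - kk) kk + m - 1) := by
  obtain ⟨i, j, hji, hle, hsum⟩ := exists_ne_sum_le_add_mul (fun i => #(F i))
    (by rwa [Fintype.card_fin])
  obtain ⟨c, rfl⟩ : ∃ c, m = c + 1 := ⟨m - 1, by omega⟩
  rw [Fintype.card_fin, Nat.add_sub_cancel] at hsum
  rw [← Nat.add_assoc, Nat.add_sub_cancel]
  exact hsum.trans (card_add_mul_card_le_max_of_cross_intersecting_Icc hk hn (hF i) (hF j) hle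
    (hFne j) (hcross i j hji.symm))
end

section
/- Let n and k be positive integers with n ≥ 2k. If F_1, F_2 ⊆ binom([n],k) are non-empty cross-intersecting families, then |F_1| + |F_2| ≤ 1 + C(n,k) − C(n−k, k). -/
/-!
Shifting by the compressions `𝓒 {i} {j}` with `i < j` keeps the families `k`-uniform,
cross-intersecting and of the same sizes, and strictly lowers the total sum of all elements, so we
may assume both families are shifted. If `#X = 2k`, complementation in `X` maps `F₂` injectively
into the `k`-sets disjoint from `F₁`. If `#X > 2k`, split both families at the largest element `a`
of `X`. The parts avoiding `a` are nonempty (shift `a` out) and are handled by induction. The parts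
containing `a`, with `a` removed, are still cross-intersecting: two disjoint ones leave an element
of `X` free, and shifting `a` to it produces disjoint members of the original families. They are
bounded by induction if both are nonempty, and otherwise by counting the `(k-1)`-sets that meet a
fixed member of the other family. Pascal's rule adds the two bounds.
-/

open Finset UV
open scoped FinsetFamily

variable {α : Type*} [DecidableEq α]

def CrossIntersecting (F₁ F₂ : Finset (Finset α)) : Prop :=
  ∀ A ∈ F₁, ∀ B ∈ F₂, (A ∩ B).Nonempty

namespace CrossIntersecting

variable {F₁ F₂ G₁ G₂ : Finset (Finset α)}

lemma symm (h : CrossIntersecting F₁ F₂) : CrossIntersecting F₂ F₁ :=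
  fun B hB A hA => inter_comm A B ▸ h A hA B hB

lemma mono (h : CrossIntersecting F₁ F₂) (h₁ : G₁ ⊆ F₁) (h₂ : G₂ ⊆ F₂) :
    CrossIntersecting G₁ G₂ :=
  fun A hA B hB => h A (h₁ hA) B (h₂ hB)

lemma nonMemberSubfamily_memberSubfamily (h : CrossIntersecting F₁ F₂) (a : α) :
    CrossIntersecting (F₁.nonMemberSubfamily a) (F₂.memberSubfamily a) := by
  intro A hA B hB
  rw [mem_nonMemberSubfamily] at hA
  rw [mem_memberSubfamily] at hB
  obtain ⟨x, hx⟩ := h A hA.1 _ hB.1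
  rw [mem_inter, mem_insert] at hx
  obtain ⟨hxA, rfl | hxB⟩ := hx
  · exact absurd hxA hA.2
  · exact ⟨x, mem_inter.2 ⟨hxA, hxB⟩⟩

lemma card_add_card_le_choose {X : Finset α} {k : ℕ} (hX : #X = 2 * k)
    (hF₁ : F₁ ⊆ powersetCard k X) (hF₂ : F₂ ⊆ powersetCard k X)
    (h : CrossIntersecting F₁ F₂) : #F₁ + #F₂ ≤ (#X).choose k := by
  have hcompl : Set.InjOn (X \ ·) F₂ := fun B hB C hC hBC => by
    rw [← Finset.sdiff_sdiff_eq_self (mem_powersetCard.1 (hF₂ hB)).1,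
      ← Finset.sdiff_sdiff_eq_self (mem_powersetCard.1 (hF₂ hC)).1]
    exact congrArg (X \ ·) hBC
  have hdisj : Disjoint F₁ (F₂.image (X \ ·)) := by
    rw [disjoint_right]
    rintro _ hA hA₁
    obtain ⟨B, hB, rfl⟩ := mem_image.1 hA
    obtain ⟨x, hx⟩ := h _ hA₁ B hB
    exact (mem_sdiff.1 (mem_inter.1 hx).1).2 (mem_inter.1 hx).2
  have hsub : F₁ ∪ F₂.image (X \ ·) ⊆ powersetCard k X := by
    refine union_subset hF₁ fun A hA => ?_
    obtain ⟨B, hB, rfl⟩ := mem_image.1 hA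
    obtain ⟨hBX, hBk⟩ := mem_powersetCard.1 (hF₂ hB)
    rw [mem_powersetCard, card_sdiff_of_subset hBX]
    exact ⟨sdiff_subset, by omega⟩
  simpa [card_union_of_disjoint hdisj, card_image_of_injOn hcompl] using card_le_card hsub

end CrossIntersecting

lemma card_add_choose_le_choose_of_forall_inter_nonempty {X B : Finset α} {r : ℕ}
    {F : Finset (Finset α)} (hB : B ⊆ X) (hF : F ⊆ powersetCard r X)
    (hmeet : ∀ A ∈ F, (A ∩ B).Nonempty) : #F + (#X - #B).choose r ≤ (#X).choose r := by
  have hdisj : Disjoint F (powersetCard r (X \ B)) := by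
    rw [disjoint_left]
    intro A hA hA'
    obtain ⟨x, hx⟩ := hmeet A hA
    exact (mem_sdiff.1 ((mem_powersetCard.1 hA').1 (mem_inter.1 hx).1)).2 (mem_inter.1 hx).2
  have hsub : F ∪ powersetCard r (X \ B) ⊆ powersetCard r X :=
    union_subset hF (powersetCard_mono sdiff_subset)
  simpa [card_union_of_disjoint hdisj, card_sdiff_of_subset hB] using card_le_card hsub

namespace UV

variable {F : Finset (Finset α)} {A : Finset α} {i j : α}

lemma compress_singleton_singleton (hi : i ∉ A) (hj : j ∈ A) :
    compress {i} {j} A = insert i (A.erase j) := by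
  rw [compress_of_disjoint_of_le (by simpa using hi) (by simpa using hj)]
  ext x
  simp only [sup_eq_union, mem_sdiff, mem_union, mem_singleton, mem_insert, mem_erase]
  grind

lemma exists_eq_insert_erase_of_mem_compression (hA : A ∈ 𝓒 {i} {j} F) (hA' : A ∉ F) :
    ∃ B ∈ F, i ∉ B ∧ j ∈ B ∧ A = insert i (B.erase j) := by
  obtain ⟨B, hB, rfl⟩ := ((mem_compression.1 hA).resolve_left fun h => hA' h.1).2
  have hne : compress {i} {j} B ≠ B := fun h => hA' (by rwa [h])
  rw [compress, ite_ne_right_iff] at hne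
  have hiB : i ∉ B := by simpa using hne.1.1
  have hjB : j ∈ B := by simpa using hne.1.2
  exact ⟨B, hB, hiB, hjB, compress_singleton_singleton hiB hjB⟩

lemma compression_subset_powersetCard {X u v : Finset α} {k : ℕ} {F : Finset (Finset α)}
    (hu : u ⊆ X) (huv : #u = #v) (hF : F ⊆ powersetCard k X) :
    𝓒 u v F ⊆ powersetCard k X := by
  intro A hA
  obtain ⟨hA, -⟩ | ⟨-, B, hB, rfl⟩ := mem_compression.1 hA
  · exact hF hA
  obtain ⟨hBX, hBk⟩ := mem_powersetCard.1 (hF hB)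
  refine mem_powersetCard.2 ⟨?_, by rw [card_compress huv, hBk]⟩
  unfold compress
  split_ifs
  · exact sdiff_subset.trans (union_subset hBX hu)
  · exact hBX

lemma sum_compression_lt_sum {β : Type*} [GeneralizedBooleanAlgebra β]
    [DecidableRel (@Disjoint β _ _)] [DecidableLE β] [DecidableEq β] {u v : β} {s : Finset β}
    (w : β → ℕ) (hw : ∀ a, compress u v a ≠ a → w (compress u v a) < w a)
    (hs : 𝓒 u v s ≠ s) : ∑ a ∈ 𝓒 u v s, w a < ∑ a ∈ s, w a := by
  rw [compression] at hs ⊢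
  have hmoved : {a ∈ s | compress u v a ∉ s}.Nonempty := by
    contrapose! hs
    rw [filter_image, hs, image_empty, union_empty, filter_true_of_mem]
    exact fun a ha => by simpa using (filter_eq_empty_iff.1 hs) ha
  conv_rhs => rw [← filter_union_filter_not_eq (fun a => compress u v a ∈ s) s]
  rw [sum_union compress_disjoint, sum_union (disjoint_filter_filter_not _ _ _),
    add_lt_add_iff_left, filter_image, sum_image compress_injOn]
  refine sum_lt_sum_of_nonempty hmoved fun a ha => hw a fun h => ?_
  rw [mem_filter, h] at ha
  exact ha.2 ha.1

lemma sum_compress_singleton_lt {A : Finset ℕ} {i j : ℕ} (hij : i < j)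
    (hA : compress {i} {j} A ≠ A) : ∑ x ∈ compress {i} {j} A, x < ∑ x ∈ A, x := by
  rw [compress, ite_ne_right_iff] at hA
  have hiA : i ∉ A := by simpa using hA.1.1
  have hjA : j ∈ A := by simpa using hA.1.2
  rw [compress_singleton_singleton hiA hjA,
    sum_insert fun h => hiA (mem_of_mem_erase h), ← add_sum_erase A _ hjA]
  omega

end UV

lemma CrossIntersecting.inter_insert_erase_nonempty {F₁ F₂ : Finset (Finset α)}
    {A B : Finset α} {i j : α} (h : CrossIntersecting F₁ F₂) (hA : A ∈ F₁)
    (hA' : compress {i} {j} A ∈ F₁) (hB : B ∈ F₂) (hiB : i ∉ B) :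
    (A ∩ insert i (B.erase j)).Nonempty := by
  by_contra hdisj
  have hmeet : ∀ x ∈ A, x ∈ B → x = j := fun x hxA hxB => by
    by_contra hxj
    exact hdisj ⟨x, mem_inter.2 ⟨hxA, mem_insert_of_mem (mem_erase.2 ⟨hxj, hxB⟩)⟩⟩
  have hiA : i ∉ A := fun hiA => hdisj ⟨i, mem_inter.2 ⟨hiA, mem_insert_self i _⟩⟩
  have hjA : j ∈ A := by
    obtain ⟨x, hx⟩ := h A hA B hB
    obtain ⟨hxA, hxB⟩ := mem_inter.1 hx
    exact hmeet x hxA hxB ▸ hxA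
  rw [compress_singleton_singleton hiA hjA] at hA'
  obtain ⟨x, hx⟩ := h _ hA' B hB
  obtain ⟨hxA, hxB⟩ := mem_inter.1 hx
  obtain rfl | hxA := mem_insert.1 hxA
  · exact hiB hxB
  · exact (mem_erase.1 hxA).1 (hmeet x (mem_of_mem_erase hxA) hxB)

lemma CrossIntersecting.compression {F₁ F₂ : Finset (Finset α)} {i j : α}
    (h : CrossIntersecting F₁ F₂) : CrossIntersecting (𝓒 {i} {j} F₁) (𝓒 {i} {j} F₂) := by
  intro A hA B hB
  by_cases hA₁ : A ∈ F₁ <;> by_cases hB₂ : B ∈ F₂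
  · exact h A hA₁ B hB₂
  · obtain ⟨B₀, hB₀, hiB₀, -, rfl⟩ := exists_eq_insert_erase_of_mem_compression hB hB₂
    exact h.inter_insert_erase_nonempty hA₁
      ((mem_compression.1 hA).resolve_right fun h => h.1 hA₁).2 hB₀ hiB₀
  · obtain ⟨A₀, hA₀, hiA₀, -, rfl⟩ := exists_eq_insert_erase_of_mem_compression hA hA₁
    rw [inter_comm]
    exact h.symm.inter_insert_erase_nonempty hB₂
      ((mem_compression.1 hB).resolve_right fun h => h.1 hB₂).2 hA₀ hiA₀
  · obtain ⟨A, -, -, -, rfl⟩ := exists_eq_insert_erase_of_mem_compression hA hA₁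
    obtain ⟨B, -, -, -, rfl⟩ := exists_eq_insert_erase_of_mem_compression hB hB₂
    exact ⟨i, mem_inter.2 ⟨mem_insert_self _ _, mem_insert_self _ _⟩⟩

section Shifted

variable {β : Type*} [LinearOrder β] {X A : Finset β} {F : Finset (Finset β)} {a : β}

def IsShifted (X : Finset β) (F : Finset (Finset β)) : Prop :=
  ∀ i ∈ X, ∀ j ∈ X, i < j → IsCompressed {i} {j} F

lemma IsShifted.insert_erase_mem (hF : IsShifted X F) (hA : A ∈ F) {i j : β} (hi : i ∈ X)
    (hj : j ∈ X) (hij : i < j) (hiA : i ∉ A) (hjA : j ∈ A) : insert i (A.erase j) ∈ F := by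
  rw [← compress_singleton_singleton hiA hjA, ← (hF i hi j hj hij).eq]
  exact compress_mem_compression hA

lemma IsShifted.nonMemberSubfamily_nonempty {k : ℕ} (hF : IsShifted X F)
    (hFk : F ⊆ powersetCard k X) (hk : k < #X) (hne : F.Nonempty) (hmax : ∀ x ∈ X, x ≤ a) :
    (F.nonMemberSubfamily a).Nonempty := by
  obtain ⟨A, hA⟩ := hne
  obtain ⟨hAX, hAk⟩ := mem_powersetCard.1 (hFk hA)
  by_cases haA : a ∉ A
  · exact ⟨A, mem_nonMemberSubfamily.2 ⟨hA, haA⟩⟩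
  rw [not_not] at haA
  obtain ⟨x, hxX, hxA⟩ := exists_mem_notMem_of_card_lt_card (hAk ▸ hk)
  have hxa : x < a := (hmax x hxX).lt_of_ne fun h => hxA (h ▸ haA)
  refine ⟨_, mem_nonMemberSubfamily.2
    ⟨hF.insert_erase_mem hA hxX (hAX haA) hxa hxA haA, fun h => ?_⟩⟩
  obtain h | h := mem_insert.1 h
  · exact hxa.ne' h
  · exact notMem_erase a A h

lemma CrossIntersecting.memberSubfamily_of_isShifted {k : ℕ} {F₁ F₂ : Finset (Finset β)}
    (h : CrossIntersecting F₁ F₂) (hF₁ : IsShifted X F₁) (hF₁k : F₁ ⊆ powersetCard k X)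
    (hF₂k : F₂ ⊆ powersetCard k X) (hX : 2 * k < #X) (hmax : ∀ x ∈ X, x ≤ a) :
    CrossIntersecting (F₁.memberSubfamily a) (F₂.memberSubfamily a) := by
  intro A hA B hB
  rw [mem_memberSubfamily] at hA hB
  by_contra hAB
  obtain ⟨hAX, hAk⟩ := mem_powersetCard.1 (hF₁k hA.1)
  have hBk := (mem_powersetCard.1 (hF₂k hB.1)).2
  have hcard : #(insert a A ∪ insert a B) < #X := by
    have := card_union_le (insert a A) (insert a B)
    omega
  obtain ⟨x, hxX, hxAB⟩ := exists_mem_notMem_of_card_lt_card hcard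
  rw [mem_union, not_or, mem_insert, mem_insert, not_or, not_or] at hxAB
  have hshift := hF₁.insert_erase_mem hA.1 hxX (hAX (mem_insert_self a A))
    ((hmax x hxX).lt_of_ne hxAB.1.1) (fun h => (mem_insert.1 h).elim hxAB.1.1 hxAB.1.2)
    (mem_insert_self a A)
  rw [erase_insert hA.2] at hshift
  obtain ⟨y, hy⟩ := h _ hshift _ hB.1
  rw [mem_inter, mem_insert, mem_insert] at hy
  obtain ⟨rfl | hyA, rfl | hyB⟩ := hy
  · exact hxAB.1.1 rfl
  · exact hxAB.2.2 hyB
  · exact hA.2 hyA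
  · exact hAB ⟨y, mem_inter.2 ⟨hyA, hyB⟩⟩

end Shifted

lemma nonMemberSubfamily_subset_powersetCard_erase {X : Finset α} {F : Finset (Finset α)}
    {k : ℕ} (hF : F ⊆ powersetCard k X) (a : α) :
    F.nonMemberSubfamily a ⊆ powersetCard k (X.erase a) := by
  intro A hA
  rw [mem_nonMemberSubfamily] at hA
  obtain ⟨hAX, hAk⟩ := mem_powersetCard.1 (hF hA.1)
  exact mem_powersetCard.2 ⟨fun x hx => mem_erase.2 ⟨fun h => hA.2 (h ▸ hx), hAX hx⟩, hAk⟩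

lemma memberSubfamily_subset_powersetCard_erase {X : Finset α} {F : Finset (Finset α)}
    {k : ℕ} (hF : F ⊆ powersetCard (k + 1) X) (a : α) :
    F.memberSubfamily a ⊆ powersetCard k (X.erase a) := by
  intro A hA
  rw [mem_memberSubfamily] at hA
  obtain ⟨hAX, hAk⟩ := mem_powersetCard.1 (hF hA.1)
  refine mem_powersetCard.2 ⟨fun x hx => mem_erase.2 ⟨fun h => hA.2 (h ▸ hx), ?_⟩, ?_⟩
  · exact hAX (mem_insert_of_mem hx)
  · rw [card_insert_of_notMem hA.2] at hAk
    omega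

lemma CrossIntersecting.exists_isShifted {X : Finset ℕ} {k : ℕ} {F₁ F₂ : Finset (Finset ℕ)}
    (h : CrossIntersecting F₁ F₂) (hF₁ : F₁ ⊆ powersetCard k X) (hF₂ : F₂ ⊆ powersetCard k X) :
    ∃ G₁ G₂ : Finset (Finset ℕ), #G₁ = #F₁ ∧ #G₂ = #F₂ ∧ G₁ ⊆ powersetCard k X ∧
      G₂ ⊆ powersetCard k X ∧ CrossIntersecting G₁ G₂ ∧ IsShifted X G₁ ∧ IsShifted X G₂ := by
  induction hm : ∑ A ∈ F₁, ∑ x ∈ A, x + ∑ A ∈ F₂, ∑ x ∈ A, x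
    using Nat.strong_induction_on generalizing F₁ F₂ with
  | _ m ih =>
  by_cases hs : IsShifted X F₁ ∧ IsShifted X F₂
  · exact ⟨F₁, F₂, rfl, rfl, hF₁, hF₂, h, hs⟩
  obtain ⟨i, hi, j, hj, hij, hc⟩ : ∃ i ∈ X, ∃ j ∈ X, i < j ∧
      ¬(IsCompressed {i} {j} F₁ ∧ IsCompressed {i} {j} F₂) := by
    simp only [IsShifted] at hs
    grind
  have hlt : ∀ F : Finset (Finset ℕ), ¬IsCompressed {i} {j} F →
      ∑ A ∈ 𝓒 {i} {j} F, ∑ x ∈ A, x < ∑ A ∈ F, ∑ x ∈ A, x :=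
    fun F hF => sum_compression_lt_sum _ (fun _ => sum_compress_singleton_lt hij) hF
  have hle (F : Finset (Finset ℕ)) :
      ∑ A ∈ 𝓒 {i} {j} F, ∑ x ∈ A, x ≤ ∑ A ∈ F, ∑ x ∈ A, x := by
    by_cases hF : IsCompressed {i} {j} F
    · rw [hF.eq]
    · exact (hlt F hF).le
  have hdecrease : ∑ A ∈ 𝓒 {i} {j} F₁, ∑ x ∈ A, x + ∑ A ∈ 𝓒 {i} {j} F₂, ∑ x ∈ A, x < m := by
    rcases not_and_or.1 hc with hc | hc
    · have := hlt F₁ hc; have := hle F₂; omega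
    · have := hlt F₂ hc; have := hle F₁; omega
  have hsingleton : #({i} : Finset ℕ) = #{j} := by simp
  obtain ⟨G₁, G₂, hc₁, hc₂, hG⟩ := ih _ hdecrease h.compression
    (compression_subset_powersetCard (singleton_subset_iff.2 hi) hsingleton hF₁)
    (compression_subset_powersetCard (singleton_subset_iff.2 hi) hsingleton hF₂) rfl
  exact ⟨G₁, G₂, hc₁.trans (card_compression _ _ _), hc₂.trans (card_compression _ _ _), hG⟩

/-- The bound on the parts of a shifted pair that contain the largest element of the ground set,
given the main bound one dimension lower. -/
lemma CrossIntersecting.card_add_card_add_choose_sub_succ_le_choose {X A₀ B₀ : Finset α} {k : ℕ}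
    {G₁ G₂ : Finset (Finset α)} (h : CrossIntersecting G₁ G₂)
    (hX : 2 * k ≤ #X) (hG₁ : G₁ ⊆ powersetCard k X) (hG₂ : G₂ ⊆ powersetCard k X)
    (hA₀ : A₀ ∈ powersetCard (k + 1) X) (hB₀ : B₀ ∈ powersetCard (k + 1) X)
    (hA₀G₂ : ∀ B ∈ G₂, (A₀ ∩ B).Nonempty) (hG₁B₀ : ∀ A ∈ G₁, (A ∩ B₀).Nonempty)
    (hboth : 1 ≤ k → G₁.Nonempty → G₂.Nonempty →
      #G₁ + #G₂ + (#X - k).choose k ≤ 1 + (#X).choose k) :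
    #G₁ + #G₂ + (#X - (k + 1)).choose k ≤ (#X).choose k := by
  obtain ⟨hA₀X, hA₀k⟩ := mem_powersetCard.1 hA₀
  obtain ⟨hB₀X, hB₀k⟩ := mem_powersetCard.1 hB₀
  rcases G₁.eq_empty_or_nonempty with rfl | hne₁
  · simpa [hA₀k] using card_add_choose_le_choose_of_forall_inter_nonempty hA₀X hG₂
      fun B hB => inter_comm A₀ B ▸ hA₀G₂ B hB
  rcases G₂.eq_empty_or_nonempty with rfl | hne₂
  · simpa [hB₀k] using card_add_choose_le_choose_of_forall_inter_nonempty hB₀X hG₁ hG₁B₀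
  obtain _ | j := k
  · obtain ⟨A, hA⟩ := hne₁
    obtain ⟨B, hB⟩ := hne₂
    simpa [card_eq_zero.1 (mem_powersetCard.1 (hG₁ hA)).2] using h A hA B hB
  have hXk : #X - (j + 1) = #X - (j + 1 + 1) + 1 := by omega
  have hpascal := Nat.choose_succ_succ' (#X - (j + 1 + 1)) j
  have hpos : 0 < (#X - (j + 1 + 1)).choose j := Nat.choose_pos (by omega)
  have := hboth (by omega) hne₁ hne₂
  rw [hXk, hpascal] at this
  omega

theorem CrossIntersecting.card_add_card_add_choose_le {X : Finset ℕ} {k : ℕ}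
    {F₁ F₂ : Finset (Finset ℕ)} (h : CrossIntersecting F₁ F₂) (hk : 1 ≤ k) (hX : 2 * k ≤ #X)
    (hF₁ : F₁ ⊆ powersetCard k X) (hF₂ : F₂ ⊆ powersetCard k X)
    (hne₁ : F₁.Nonempty) (hne₂ : F₂.Nonempty) :
    #F₁ + #F₂ + (#X - k).choose k ≤ 1 + (#X).choose k := by
  induction X using Finset.strongInduction generalizing k F₁ F₂ with
  | H X ih =>
  obtain ⟨k, rfl⟩ : ∃ j, k = j + 1 := ⟨k - 1, by omega⟩
  rcases hX.eq_or_lt with hX | hX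
  · have := h.card_add_card_le_choose hX.symm hF₁ hF₂
    rw [show #X - (k + 1) = k + 1 by omega, Nat.choose_self]
    omega
  obtain ⟨G₁, G₂, hc₁, hc₂, hG₁, hG₂, hG, hS₁, hS₂⟩ := h.exists_isShifted hF₁ hF₂
  rw [← card_pos, ← hc₁, card_pos] at hne₁
  rw [← card_pos, ← hc₂, card_pos] at hne₂
  set a := X.max' (card_pos.1 (by omega))
  have haX : a ∈ X := X.max'_mem _
  have hmax : ∀ x ∈ X, x ≤ a := fun x hx => X.le_max' x hx
  have hX' := card_erase_add_one haX
  have hnon₁ := nonMemberSubfamily_subset_powersetCard_erase hG₁ a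
  have hnon₂ := nonMemberSubfamily_subset_powersetCard_erase hG₂ a
  have hmem₁ := memberSubfamily_subset_powersetCard_erase hG₁ a
  have hmem₂ := memberSubfamily_subset_powersetCard_erase hG₂ a
  obtain ⟨A₀, hA₀⟩ := hS₁.nonMemberSubfamily_nonempty hG₁ (by omega) hne₁ hmax
  obtain ⟨B₀, hB₀⟩ := hS₂.nonMemberSubfamily_nonempty hG₂ (by omega) hne₂ hmax
  have hGnon : CrossIntersecting (G₁.nonMemberSubfamily a) (G₂.nonMemberSubfamily a) :=
    hG.mono (filter_subset _ _) (filter_subset _ _)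
  have hnonBound := ih _ (erase_ssubset haX) hGnon hk (by omega) hnon₁ hnon₂ ⟨A₀, hA₀⟩ ⟨B₀, hB₀⟩
  have hG' := hG.memberSubfamily_of_isShifted hS₁ hG₁ hG₂ hX hmax
  have hmemBound := hG'.card_add_card_add_choose_sub_succ_le_choose (by omega) hmem₁ hmem₂
    (hnon₁ hA₀) (hnon₂ hB₀) (hG.nonMemberSubfamily_memberSubfamily a A₀ hA₀)
    (fun A hA => (hG.symm.nonMemberSubfamily_memberSubfamily a).symm A hA B₀ hB₀)
    fun hk' hne₁' hne₂' => ih _ (erase_ssubset haX) hG' hk' (by omega) hmem₁ hmem₂ hne₁' hne₂'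
  rw [← hc₁, ← hc₂, ← card_memberSubfamily_add_card_nonMemberSubfamily a G₁,
    ← card_memberSubfamily_add_card_nonMemberSubfamily a G₂, ← hX', Nat.choose_succ_succ',
    show #(X.erase a) + 1 - (k + 1) = #(X.erase a) - (k + 1) + 1 by omega,
    Nat.choose_succ_succ']
  omega

theorem stmt4 (n k : ℕ) (hk : 1 ≤ k) (hn : 2 * k ≤ n)
    (F1 F2 : Finset (Finset ℕ))
    (hF1 : F1 ⊆ (Finset.Icc 1 n).powersetCard k)
    (hF2 : F2 ⊆ (Finset.Icc 1 n).powersetCard k)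
    (hne1 : F1.Nonempty) (hne2 : F2.Nonempty)
    (hcross : ∀ A ∈ F1, ∀ B ∈ F2, (A ∩ B).Nonempty) :
    F1.card + F2.card ≤ 1 + Nat.choose n k - Nat.choose (n - k) k := by
  have hcard : #(Icc 1 n) = n := by simp
  have hbound := CrossIntersecting.card_add_card_add_choose_le (X := Icc 1 n) hcross hk
    (by rwa [hcard]) hF1 hF2 hne1 hne2
  rw [hcard] at hbound
  omega
end

section
/- Let R_1, R_2 be nonempty subsets of [n] with max(R_1) = k_1 and max(R_2) = k_2, and suppose n ≥ k_1 + k_2. Let F_1 ⊆ binom([n],R_1) and F_2 ⊆ binom([n],R_2) be monotone, left-compressed, non-empty cross-intersecting families with generating families G_1 and G_2 respectively. Then E_1 ∩ E_2 ≠ ∅ for all E_1 ∈ G_1 and E_2 ∈ G_2. -/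
open Finset

/-- binom([n],R): all subsets of [n] = {1,...,n} whose cardinality lies in R. -/
def famR (n : ℕ) (R : Finset ℕ) : Finset (Finset ℕ) :=
  (Finset.Icc 1 n).powerset.filter (fun A => A.card ∈ R)

/-- The up-set ⟨E⟩_R of E inside binom([n],R). -/
def upSet (n : ℕ) (R : Finset ℕ) (E : Finset ℕ) : Finset (Finset ℕ) :=
  (famR n R).filter (fun A => E ⊆ A)

/-- F ⊆ binom([n],R) is monotone. -/
def MonotoneFam (n : ℕ) (R : Finset ℕ) (F : Finset (Finset ℕ)) : Prop :=
  ∀ A ∈ F, ∀ B, A ⊆ B → B ⊆ Finset.Icc 1 n → B.card ∈ R → B ∈ F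

/-- The shift s_{i,j} applied to a member A of F. -/
def shiftSet (F : Finset (Finset ℕ)) (i j : ℕ) (A : Finset ℕ) : Finset ℕ :=
  if j ∈ A ∧ i ∉ A ∧ insert i (A.erase j) ∉ F then insert i (A.erase j) else A

/-- The shift s_{i,j} applied to the family F. -/
def shiftFam (i j : ℕ) (F : Finset (Finset ℕ)) : Finset (Finset ℕ) :=
  F.image (shiftSet F i j)

/-- F is left-compressed: s_{i,j}(F) = F for all 1 ≤ i < j ≤ n. -/
def LeftCompressed (n : ℕ) (F : Finset (Finset ℕ)) : Prop :=
  ∀ i j, 1 ≤ i → i < j → j ≤ n → shiftFam i j F = F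

/-- E is a generating set of the monotone family F ⊆ binom([n],R):
E ⊆ [n], |E| ≤ max(R), ⟨E⟩_R ⊆ F, and E is minimal under inclusion with this property. -/
def IsGenSet (n : ℕ) (R : Finset ℕ) (F : Finset (Finset ℕ)) (E : Finset ℕ) : Prop :=
  E ⊆ Finset.Icc 1 n ∧ E.card ≤ R.sup id ∧ upSet n R E ⊆ F ∧
    ∀ E', E' ⊂ E → ¬ upSet n R E' ⊆ F

/-!
If generating sets `E₁ ∈ G₁` and `E₂ ∈ G₂` were disjoint, extend `E₁` to a `k₁`-set `A ⊆ [n]`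
avoiding `E₂`, then `E₂` to a `k₂`-set `B ⊆ [n]` avoiding `A`; both steps fit since
`k₁ + k₂ ≤ n`. As `A` and `B` lie in the up-sets of `E₁` and `E₂`, they belong to `F₁` and `F₂`,
and their disjointness contradicts cross-intersection.
-/

theorem Finset.exists_superset_disjoint_card_eq {α : Type*} [DecidableEq α] {U E D : Finset α}
    {k : ℕ} (hEU : E ⊆ U) (hDU : D ⊆ U) (hED : Disjoint E D) (hEk : #E ≤ k)
    (hk : k + #D ≤ #U) : ∃ A, E ⊆ A ∧ A ⊆ U ∧ Disjoint A D ∧ #A = k := by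
  obtain ⟨A, hEA, hAUD, hAk⟩ := exists_subsuperset_card_eq (subset_sdiff.mpr ⟨hEU, hED⟩) hEk
    (by rw [card_sdiff_of_subset hDU]; omega)
  exact ⟨A, hEA, hAUD.trans sdiff_subset, (subset_sdiff.mp hAUD).2, hAk⟩

theorem mem_of_upSet_subset {n : ℕ} {R : Finset ℕ} {F : Finset (Finset ℕ)} {E A : Finset ℕ}
    (hF : upSet n R E ⊆ F) (hEA : E ⊆ A) (hA : A ⊆ Icc 1 n) (hAR : #A ∈ R) : A ∈ F :=
  hF (mem_filter.mpr ⟨mem_filter.mpr ⟨mem_powerset.mpr hA, hAR⟩, hEA⟩)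

theorem IsGenSet.card_le {n k : ℕ} {R : Finset ℕ} {F : Finset (Finset ℕ)} {E : Finset ℕ}
    (hE : IsGenSet n R F E) (hk : IsGreatest (R : Set ℕ) k) : #E ≤ k :=
  hE.2.1.trans (Finset.sup_le fun _ hr => hk.2 hr)

theorem IsGenSet.exists_mem_disjoint {n k : ℕ} {R : Finset ℕ} {F : Finset (Finset ℕ)}
    {E D : Finset ℕ} (hE : IsGenSet n R F E) (hk : IsGreatest (R : Set ℕ) k)
    (hD : D ⊆ Icc 1 n) (hED : Disjoint E D) (hkD : k + #D ≤ n) :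
    ∃ A ∈ F, A ⊆ Icc 1 n ∧ Disjoint A D ∧ #A = k := by
  obtain ⟨A, hEA, hA, hAD, hAk⟩ := exists_superset_disjoint_card_eq hE.1 hD hED (hE.card_le hk)
    (by rwa [Nat.card_Icc, Nat.add_sub_cancel])
  exact ⟨A, mem_of_upSet_subset hE.2.2.1 hEA hA (hAk ▸ hk.1), hA, hAD, hAk⟩

theorem stmt7_general (n k1 k2 : ℕ) (R1 R2 : Finset ℕ)
    (hk1 : IsGreatest (R1 : Set ℕ) k1) (hk2 : IsGreatest (R2 : Set ℕ) k2)
    (hn : k1 + k2 ≤ n)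
    (F1 F2 : Finset (Finset ℕ))
    (hcross : ∀ A ∈ F1, ∀ B ∈ F2, (A ∩ B).Nonempty)
    (E1 E2 : Finset ℕ)
    (hE1 : IsGenSet n R1 F1 E1) (hE2 : IsGenSet n R2 F2 E2) :
    (E1 ∩ E2).Nonempty := by
  rw [← not_disjoint_iff_nonempty_inter]
  intro hE12
  have hE2k := hE2.card_le hk2
  obtain ⟨A, hA, hAn, hAE2, hAk⟩ := hE1.exists_mem_disjoint hk1 hE2.1 hE12 (by omega)
  obtain ⟨B, hB, -, hBA, -⟩ := hE2.exists_mem_disjoint hk2 hAn hAE2.symm (by omega)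
  exact not_disjoint_iff_nonempty_inter.mpr (hcross A hA B hB) hBA.symm

theorem stmt7 (n k1 k2 : ℕ) (R1 R2 : Finset ℕ)
    (hR1ne : R1.Nonempty) (hR2ne : R2.Nonempty)
    (hR1sub : R1 ⊆ Finset.Icc 1 n) (hR2sub : R2 ⊆ Finset.Icc 1 n)
    (hk1 : IsGreatest (R1 : Set ℕ) k1) (hk2 : IsGreatest (R2 : Set ℕ) k2)
    (hn : k1 + k2 ≤ n)
    (F1 F2 : Finset (Finset ℕ))
    (hF1 : F1 ⊆ famR n R1) (hF2 : F2 ⊆ famR n R2)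
    (hmono1 : MonotoneFam n R1 F1) (hmono2 : MonotoneFam n R2 F2)
    (hlc1 : LeftCompressed n F1) (hlc2 : LeftCompressed n F2)
    (hne1 : F1.Nonempty) (hne2 : F2.Nonempty)
    (hcross : ∀ A ∈ F1, ∀ B ∈ F2, (A ∩ B).Nonempty)
    (E1 E2 : Finset ℕ)
    (hE1 : IsGenSet n R1 F1 E1) (hE2 : IsGenSet n R2 F2 E2) :
    (E1 ∩ E2).Nonempty :=
  stmt7_general n k1 k2 R1 R2 hk1 hk2 hn F1 F2 hcross E1 E2 hE1 hE2
end

section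
/- Let R be a nonempty subset of [n] and let F ⊆ binom([n],R) be a monotone, left-compressed family with generating family G and extent l. For any 1 ≤ x < y ≤ l and any E ∈ G, there exists E_0 ∈ G with E_0 ⊆ τ_{x,y}(E), where τ_{x,y}(E) = (E \ {y}) ∪ {x} if y ∈ E and x ∉ E, and τ_{x,y}(E) = E otherwise. -/
open Finset

/-- τ_{x,y}(E) = (E \ {y}) ∪ {x} if y ∈ E and x ∉ E, and E otherwise. -/
def tauShift (x y : ℕ) (E : Finset ℕ) : Finset ℕ :=
  if y ∈ E ∧ x ∉ E then insert x (E.erase y) else E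

/-!
Since `x < y`, left-compressedness makes `F` closed under replacing `y` by `x`. So if
`A ⊇ τ_{x,y}(E)` has admissible size but misses `y`, the set obtained from `A` by trading `x` for `y`
contains `E`, lies in `F`, and shifts back to `A`; hence `A ∈ F`. Thus `⟨τ_{x,y}(E)⟩_R ⊆ F`, and a
minimal subset of `τ_{x,y}(E)` with this property is a generating set.
-/

lemma mem_famR {n : ℕ} {R : Finset ℕ} {A : Finset ℕ} :
    A ∈ famR n R ↔ A ⊆ Icc 1 n ∧ A.card ∈ R := by
  simp [famR]

lemma mem_upSet {n : ℕ} {R : Finset ℕ} {E A : Finset ℕ} :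
    A ∈ upSet n R E ↔ A ∈ famR n R ∧ E ⊆ A :=
  mem_filter

section tauShift

variable {x y : ℕ} {E : Finset ℕ}

lemma card_tauShift (x y : ℕ) (E : Finset ℕ) : (tauShift x y E).card = E.card := by
  unfold tauShift
  split_ifs with h
  · rw [card_insert_of_notMem fun hx => h.2 (mem_of_mem_erase hx), card_erase_of_mem h.1]
    have := card_pos.2 ⟨y, h.1⟩
    omega
  · rfl

lemma tauShift_subset {S : Finset ℕ} (hE : E ⊆ S) (hx : y ∈ E → x ∈ S) :
    tauShift x y E ⊆ S := by
  unfold tauShift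
  split_ifs with h
  · exact insert_subset (hx h.1) ((erase_subset y E).trans hE)
  · exact hE

lemma tauShift_mem_famR {n : ℕ} {R : Finset ℕ} (hE : E ∈ famR n R)
    (hx : y ∈ E → x ∈ Icc 1 n) : tauShift x y E ∈ famR n R := by
  rw [mem_famR] at hE ⊢
  exact ⟨tauShift_subset hE.1 hx, card_tauShift x y E ▸ hE.2⟩

lemma tauShift_tauShift (hx : x ∈ E) (hy : y ∉ E) : tauShift x y (tauShift y x E) = E := by
  have hxy : x ≠ y := fun h => hy (h ▸ hx)
  have hyx : y ∉ E.erase x := fun h => hy (mem_of_mem_erase h)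
  have hx' : x ∉ insert y (E.erase x) := by simp [hxy]
  simp only [tauShift, hx, hy, not_false_eq_true, and_self, if_true, mem_insert_self, hx',
    erase_insert hyx, insert_erase hx]

end tauShift

lemma LeftCompressed.tauShift_mem {n : ℕ} {F : Finset (Finset ℕ)} (hlc : LeftCompressed n F)
    {x y : ℕ} (hx : 1 ≤ x) (hxy : x < y) (hyn : y ≤ n) {B : Finset ℕ} (hB : B ∈ F) :
    tauShift x y B ∈ F := by
  unfold tauShift
  split_ifs with h
  · by_contra hT
    apply hT
    rw [← hlc x y hx hxy hyn]
    exact mem_image.2 ⟨B, hB, by simp [shiftSet, h, hT]⟩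
  · exact hB

lemma upSet_tauShift_subset {n : ℕ} {R : Finset ℕ} {F : Finset (Finset ℕ)}
    (hlc : LeftCompressed n F) {x y : ℕ} (hx : 1 ≤ x) (hxy : x < y) {E : Finset ℕ}
    (hEn : E ⊆ Icc 1 n) (hE : upSet n R E ⊆ F) : upSet n R (tauShift x y E) ⊆ F := by
  unfold tauShift
  split_ifs with h
  swap
  · exact hE
  obtain ⟨hyE, hxE⟩ := h
  have hyn : y ∈ Icc 1 n := hEn hyE
  intro A hA
  obtain ⟨hAfam, hTA⟩ := mem_upSet.1 hA
  obtain ⟨hxA, hEyA⟩ := insert_subset_iff.1 hTA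
  have hE_eq : insert y (E.erase y) = E := insert_erase hyE
  by_cases hyA : y ∈ A
  · exact hE (mem_upSet.2 ⟨hAfam, hE_eq ▸ insert_subset hyA hEyA⟩)
  · have hEB : E ⊆ tauShift y x A := by
      rw [tauShift, if_pos ⟨hxA, hyA⟩, ← hE_eq]
      refine insert_subset_insert y fun a ha => mem_erase.2 ⟨?_, hEyA ha⟩
      rintro rfl
      exact hxE (mem_of_mem_erase ha)
    have hBF : tauShift y x A ∈ F :=
      hE (mem_upSet.2 ⟨tauShift_mem_famR hAfam fun _ => hyn, hEB⟩)
    simpa only [tauShift_tauShift hxA hyA] using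
      hlc.tauShift_mem hx hxy (mem_Icc.1 hyn).2 hBF

lemma exists_isGenSet_subset {n : ℕ} {R : Finset ℕ} {F : Finset (Finset ℕ)} {S : Finset ℕ}
    (hSn : S ⊆ Icc 1 n) (hScard : S.card ≤ R.sup id) (hS : upSet n R S ⊆ F) :
    ∃ E, IsGenSet n R F E ∧ E ⊆ S := by
  obtain ⟨E, hES, hEmin⟩ := exists_minimal_le_of_wellFoundedLT (fun S => upSet n R S ⊆ F) S hS
  exact ⟨E, ⟨hES.trans hSn, (card_le_card hES).trans hScard, hEmin.prop,
    fun _ hE' => hEmin.not_prop_of_lt hE'⟩, hES⟩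

theorem stmt8_general (n : ℕ) (R : Finset ℕ)
    (F : Finset (Finset ℕ))
    (hlc : LeftCompressed n F)
    (x y : ℕ) (hx : 1 ≤ x) (hxy : x < y)
    (E : Finset ℕ) (hE : IsGenSet n R F E) :
    ∃ E0, IsGenSet n R F E0 ∧ E0 ⊆ tauShift x y E := by
  obtain ⟨hEn, hEcard, hEup, -⟩ := hE
  have hxIcc : y ∈ E → x ∈ Icc 1 n := fun hy =>
    mem_Icc.2 ⟨hx, hxy.le.trans (mem_Icc.1 (hEn hy)).2⟩
  exact exists_isGenSet_subset (tauShift_subset hEn hxIcc) (card_tauShift x y E ▸ hEcard)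
    (upSet_tauShift_subset hlc hx hxy hEn hEup)

theorem stmt8 (n : ℕ) (R : Finset ℕ) (hRne : R.Nonempty) (hRsub : R ⊆ Finset.Icc 1 n)
    (F : Finset (Finset ℕ)) (hF : F ⊆ famR n R)
    (hmono : MonotoneFam n R F) (hlc : LeftCompressed n F)
    (l : ℕ) (hl : IsGreatest {x | ∃ E, IsGenSet n R F E ∧ x ∈ E} l)
    (x y : ℕ) (hx : 1 ≤ x) (hxy : x < y) (hyl : y ≤ l)
    (E : Finset ℕ) (hE : IsGenSet n R F E) :
    ∃ E0, IsGenSet n R F E0 ∧ E0 ⊆ tauShift x y E :=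
  stmt8_general n R F hlc x y hx hxy E hE
end

section
/- Let m ≥ 2 and n be positive integers, and for each i ∈ [m] let R_i be a nonempty subset of [n]. Fix an index i_0 with max(R_{i_0}) = max_i max(R_i), set k_1 = max(R_{i_0}) and k_2 = max_{i ≠ i_0} max(R_i). Fix γ ∈ [m] and let k = min{x : x ∈ R_j for some j ∈ [m]\{γ}}. For 1 ≤ l ≤ k define F_γ(l) = Σ_{a ∈ R_γ} ( C(n,a) − C(n−l, a) ) + Σ_{α ∈ [m]\{γ}} Σ_{b ∈ R_α} C(n−l, b−l). If n > k_1 + k_2, then F_γ(l) ≤ max{ F_γ(1), F_γ(k) } for every l with 1 ≤ l ≤ k. -/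
open Finset

/-- F_γ(l) = |M1(n,R_γ,[l])| + Σ_{α≠γ} |M2(n,R_α,[l])|, written via binomial coefficients. -/
def Fval (m n : ℕ) (R : Fin m → Finset ℕ) (γ : Fin m) (l : ℕ) : ℕ :=
  (∑ a ∈ R γ, (Nat.choose n a - Nat.choose (n - l) a)) +
    ∑ α ∈ Finset.univ.erase γ, ∑ b ∈ R α, Nat.choose (n - l) (b - l)

/-!
By Pascal's rule, `F(t+1) - F(t) = gainM1 t - lossM2 t`. Let `s ≥ k` bound the sizes in `R α`,
`α ≠ γ`, with `a + s < n` for `a ∈ R γ` (possible since `n > k₁ + k₂`). From `t` to `t + 1`,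
`gainM1` grows by a factor at least `(s-t+1)/(n-t-1)` while `lossM2` shrinks by a factor at most
`(s-t)/(n-t-1)`, so once `F` rises on `[1, k]` it keeps rising. Thus `F` first falls and then rises,
and its maximum on `[1, k]` is attained at an end.
-/

theorem le_of_rise_persists {α : Type*} [LinearOrder α] {f : ℕ → α} {a b : ℕ}
    (hf : ∀ t, a ≤ t → t + 2 ≤ b → f t ≤ f (t + 1) → f (t + 1) ≤ f (t + 2))
    {t : ℕ} (hat : a ≤ t) (htb : t + 1 ≤ b) (hrise : f t ≤ f (t + 1)) : f (t + 1) ≤ f b := by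
  have chain : ∀ u, t ≤ u → u + 1 ≤ b → f u ≤ f (u + 1) ∧ f (t + 1) ≤ f (u + 1) := by
    intro u htu
    induction u, htu using Nat.le_induction with
    | base => exact fun _ => ⟨hrise, le_rfl⟩
    | succ u htu ih =>
      intro hub
      have hstep := hf u (hat.trans htu) hub (ih (by omega)).1
      exact ⟨hstep, (ih (by omega)).2.trans hstep⟩
  simpa [Nat.sub_add_cancel (by omega : 1 ≤ b)] using (chain (b - 1) (by omega) (by omega)).2

theorem le_max_of_rise_persists {α : Type*} [LinearOrder α] {f : ℕ → α} {a b : ℕ}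
    (hf : ∀ t, a ≤ t → t + 2 ≤ b → f t ≤ f (t + 1) → f (t + 1) ≤ f (t + 2))
    {l : ℕ} (hal : a ≤ l) (hlb : l ≤ b) : f l ≤ max (f a) (f b) := by
  induction l, hal using Nat.le_induction with
  | base => exact le_max_left _ _
  | succ l hal ih =>
    rcases le_total (f l) (f (l + 1)) with hrise | hfall
    · exact (le_of_rise_persists hf hal hlb hrise).trans (le_max_right _ _)
    · exact hfall.trans (ih (by omega))

theorem Nat.choose_sub_choose_sub_succ {n a t : ℕ} (ha : 1 ≤ a) (ht : t < n) :
    n.choose a - (n - (t + 1)).choose a =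
      n.choose a - (n - t).choose a + (n - (t + 1)).choose (a - 1) := by
  have pascal : (n - t).choose a = (n - (t + 1)).choose (a - 1) + (n - (t + 1)).choose a := by
    rw [show n - t = n - (t + 1) + 1 by omega, show a = a - 1 + 1 by omega,
      Nat.choose_succ_succ', Nat.add_sub_cancel]
  have hle : (n - t).choose a ≤ n.choose a := Nat.choose_le_choose a (Nat.sub_le n t)
  omega

theorem Nat.choose_sub_succ_add_choose {n b t : ℕ} (hb : t < b) (ht : t < n) :
    (n - (t + 1)).choose (b - (t + 1)) + (n - (t + 1)).choose (b - t) =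
      (n - t).choose (b - t) := by
  rw [show n - t = n - (t + 1) + 1 by omega, show b - t = b - (t + 1) + 1 by omega,
    Nat.choose_succ_succ']

theorem Nat.mul_choose_le_mul_choose_pred {N j c : ℕ} (h : c + j ≤ N) :
    c * N.choose j ≤ N * (N - 1).choose j := by
  cases N with
  | zero => simp [show c = 0 by omega]
  | succ N =>
    have key := Nat.choose_mul_succ_eq N j
    rw [Nat.add_sub_cancel, mul_comm (N + 1), key, mul_comm]
    exact Nat.mul_le_mul_left _ (by omega)

theorem Nat.mul_choose_pred_le_mul_choose_succ {N j c : ℕ} (h : j + 1 ≤ c) :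
    N * (N - 1).choose j ≤ c * N.choose (j + 1) := by
  cases N with
  | zero => simp
  | succ N =>
    rw [Nat.add_sub_cancel, Nat.add_one_mul_choose_eq, mul_comm c]
    exact Nat.mul_le_mul_left _ h

/-- `|M1(n,A,[t+1])| - |M1(n,A,[t])|`: the sets meeting `[t+1]` only in `t + 1`. -/
def gainM1 (n : ℕ) (A : Finset ℕ) (t : ℕ) : ℕ :=
  ∑ a ∈ A, (n - (t + 1)).choose (a - 1)

/-- `Σ_α |M2(n,B α,[t])| - |M2(n,B α,[t+1])|`: the sets containing `[t]` but not `t + 1`. -/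
def lossM2 {ι : Type*} (n : ℕ) (S : Finset ι) (B : ι → Finset ℕ) (t : ℕ) : ℕ :=
  ∑ α ∈ S, ∑ b ∈ B α, (n - (t + 1)).choose (b - t)

theorem Fval_succ_add_lossM2 {m n t : ℕ} {R : Fin m → Finset ℕ} {γ : Fin m}
    (hA : ∀ a ∈ R γ, 1 ≤ a) (hB : ∀ α ∈ univ.erase γ, ∀ b ∈ R α, t < b) (ht : t < n) :
    Fval m n R γ (t + 1) + lossM2 n (univ.erase γ) R t = Fval m n R γ t + gainM1 n (R γ) t := by
  have hM1 : ∑ a ∈ R γ, (n.choose a - (n - (t + 1)).choose a) =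
      ∑ a ∈ R γ, (n.choose a - (n - t).choose a) + gainM1 n (R γ) t := by
    rw [gainM1, ← sum_add_distrib]
    exact sum_congr rfl fun a ha => Nat.choose_sub_choose_sub_succ (hA a ha) ht
  have hM2 : ∑ α ∈ univ.erase γ, ∑ b ∈ R α, (n - (t + 1)).choose (b - (t + 1)) +
      lossM2 n (univ.erase γ) R t = ∑ α ∈ univ.erase γ, ∑ b ∈ R α, (n - t).choose (b - t) := by
    rw [lossM2, ← sum_add_distrib]
    refine sum_congr rfl fun α hα => ?_
    rw [← sum_add_distrib]
    exact sum_congr rfl fun b hb => Nat.choose_sub_succ_add_choose (hB α hα b hb) ht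
  simp only [Fval]
  omega

section Ratio

variable {n s t : ℕ}

theorem mul_gainM1_le {A : Finset ℕ} (hA : ∀ a ∈ A, 1 ≤ a ∧ a + s < n) (hts : t ≤ s) :
    (s - t + 1) * gainM1 n A t ≤ (n - (t + 1)) * gainM1 n A (t + 1) := by
  rw [gainM1, gainM1, mul_sum, mul_sum]
  refine sum_le_sum fun a ha => ?_
  have := Nat.mul_choose_le_mul_choose_pred (N := n - (t + 1)) (j := a - 1) (c := s - t + 1)
    (by have := hA a ha; omega)
  rwa [show n - (t + 1) - 1 = n - (t + 1 + 1) by omega] at this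

theorem mul_lossM2_le {ι : Type*} {S : Finset ι} {B : ι → Finset ℕ}
    (hB : ∀ α ∈ S, ∀ b ∈ B α, t < b ∧ b ≤ s) :
    (n - (t + 1)) * lossM2 n S B (t + 1) ≤ (s - t) * lossM2 n S B t := by
  rw [lossM2, lossM2, mul_sum, mul_sum]
  refine sum_le_sum fun α hα => ?_
  rw [mul_sum, mul_sum]
  refine sum_le_sum fun b hb => ?_
  have hb' := hB α hα b hb
  have := Nat.mul_choose_pred_le_mul_choose_succ (N := n - (t + 1)) (j := b - (t + 1))
    (c := s - t) (by omega)
  rwa [show n - (t + 1) - 1 = n - (t + 1 + 1) by omega,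
    show b - (t + 1) + 1 = b - t by omega] at this

theorem lossM2_succ_le_gainM1_succ {ι : Type*} {A : Finset ℕ} {S : Finset ι}
    {B : ι → Finset ℕ} (hA : ∀ a ∈ A, 1 ≤ a ∧ a + s < n)
    (hB : ∀ α ∈ S, ∀ b ∈ B α, t < b ∧ b ≤ s) (hts : t < s) (hsn : s < n)
    (h : lossM2 n S B t ≤ gainM1 n A t) : lossM2 n S B (t + 1) ≤ gainM1 n A (t + 1) := by
  refine Nat.le_of_mul_le_mul_left ?_ (by omega : 0 < n - (t + 1))
  calc (n - (t + 1)) * lossM2 n S B (t + 1)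
      ≤ (s - t) * lossM2 n S B t := mul_lossM2_le hB
    _ ≤ (s - t + 1) * gainM1 n A t := Nat.mul_le_mul (Nat.le_succ _) h
    _ ≤ (n - (t + 1)) * gainM1 n A (t + 1) := mul_gainM1_le hA hts.le

end Ratio

theorem add_le_largest_add_second {ι : Type*} {f : ι → ℕ} {i0 : ι} (hi0 : ∀ i, f i ≤ f i0) {k2 : ℕ}
    (hk2 : ∀ i, i ≠ i0 → f i ≤ k2) {i j : ι} (hij : i ≠ j) : f i + f j ≤ f i0 + k2 := by
  by_cases hi : i = i0
  · subst hi
    exact Nat.add_le_add_left (hk2 j (Ne.symm hij)) _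
  by_cases hj : j = i0
  · subst hj
    rw [add_comm]
    exact Nat.add_le_add_left (hk2 i hi) _
  exact Nat.add_le_add (hi0 i) (hk2 j hj)

theorem stmt12_general (m n : ℕ)
    (R : Fin m → Finset ℕ)
    (hRsub : ∀ i, R i ⊆ Finset.Icc 1 n)
    (i0 : Fin m) (hi0 : ∀ i, (R i).sup id ≤ (R i0).sup id)
    (k2 : ℕ) (hk2 : IsGreatest {x | ∃ i, i ≠ i0 ∧ x = (R i).sup id} k2)
    (γ : Fin m) (k : ℕ)
    (hk : IsLeast {x | ∃ j, j ≠ γ ∧ x ∈ R j} k)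
    (hn2 : (R i0).sup id + k2 < n)
    (l : ℕ) (hl1 : 1 ≤ l) (hlk : l ≤ k) :
    Fval m n R γ l ≤ max (Fval m n R γ 1) (Fval m n R γ k) := by
  obtain ⟨j0, hj0, hkj0⟩ := hk.1
  obtain ⟨β, hβ, hβmax⟩ := exists_max_image (univ.erase γ) (fun α => (R α).sup id)
    ⟨j0, mem_erase.mpr ⟨hj0, mem_univ _⟩⟩
  have hsum : (R γ).sup id + (R β).sup id < n :=
    (add_le_largest_add_second hi0 (fun i hi => hk2.2 ⟨i, hi, rfl⟩)
      (mem_erase.mp hβ).1.symm).trans_lt hn2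
  have hA : ∀ a ∈ R γ, 1 ≤ a ∧ a + (R β).sup id < n := fun a ha =>
    ⟨(mem_Icc.mp (hRsub γ ha)).1, by have := le_sup (f := id) ha; simp only [id] at this; omega⟩
  have hB : ∀ α ∈ univ.erase γ, ∀ b ∈ R α, k ≤ b ∧ b ≤ (R β).sup id := fun α hα b hb =>
    ⟨hk.2 ⟨α, (mem_erase.mp hα).1, hb⟩, (le_sup (f := id) hb).trans (hβmax α hα)⟩
  have hks : k ≤ (R β).sup id := (hB j0 (mem_erase.mpr ⟨hj0, mem_univ _⟩) k hkj0).2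
  have hrise_iff : ∀ t, t + 1 ≤ k →
      (Fval m n R γ t ≤ Fval m n R γ (t + 1) ↔ lossM2 n (univ.erase γ) R t ≤ gainM1 n (R γ) t) :=
    fun t ht => by
      have := Fval_succ_add_lossM2 (n := n) (t := t) (fun a ha => (hA a ha).1)
        (fun α hα b hb => by have := (hB α hα b hb).1; omega) (by omega)
      omega
  refine le_max_of_rise_persists (fun t _ ht hrise => ?_) hl1 hlk
  rw [hrise_iff t (by omega)] at hrise
  rw [hrise_iff (t + 1) (by omega)]
  exact lossM2_succ_le_gainM1_succ hA (fun α hα b hb => ⟨by have := hB α hα b hb; omega,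
    (hB α hα b hb).2⟩) (by omega) (by omega) hrise

theorem stmt12 (m n : ℕ) (hm : 2 ≤ m) (hn : 1 ≤ n)
    (R : Fin m → Finset ℕ) (hRne : ∀ i, (R i).Nonempty)
    (hRsub : ∀ i, R i ⊆ Finset.Icc 1 n)
    (i0 : Fin m) (hi0 : ∀ i, (R i).sup id ≤ (R i0).sup id)
    (k2 : ℕ) (hk2 : IsGreatest {x | ∃ i, i ≠ i0 ∧ x = (R i).sup id} k2)
    (γ : Fin m) (k : ℕ)
    (hk : IsLeast {x | ∃ j, j ≠ γ ∧ x ∈ R j} k)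
    (hn2 : (R i0).sup id + k2 < n)
    (l : ℕ) (hl1 : 1 ≤ l) (hlk : l ≤ k) :
    Fval m n R γ l ≤ max (Fval m n R γ 1) (Fval m n R γ k) :=
  stmt12_general m n R hRsub i0 hi0 k2 hk2 γ k hk hn2 l hl1 hlk
end

section
/- Let n, l, u, a, b be natural numbers with 1 ≤ u ≤ l, u ≤ a, l + 1 − u ≤ b, and n > a + b. Then C(n−l, b−l+u−1) · C(n−l, a−u) < C(n−l, b−l+u) · C(n−l, a−u+1). -/
theorem Nat.choose_mul_choose_lt_choose_succ_mul_choose_succ {m i j : ℕ} (h : i + j + 2 ≤ m) :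
    m.choose i * m.choose j < m.choose (i + 1) * m.choose (j + 1) := by
  have hpos : 0 < m.choose i * m.choose j :=
    Nat.mul_pos (Nat.choose_pos (by omega)) (Nat.choose_pos (by omega))
  have hlt : (i + 1) * (j + 1) < (m - i) * (m - j) :=
    calc (i + 1) * (j + 1) < (m - j) * (m - i) := Nat.mul_lt_mul'' (by omega) (by omega)
      _ = (m - i) * (m - j) := Nat.mul_comm _ _
  refine Nat.lt_of_mul_lt_mul_right (a := (i + 1) * (j + 1)) ?_
  calc m.choose i * m.choose j * ((i + 1) * (j + 1))
      < m.choose i * m.choose j * ((m - i) * (m - j)) := Nat.mul_lt_mul_of_pos_left hlt hpos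
    _ = m.choose i * (m - i) * (m.choose j * (m - j)) := by ring
    _ = m.choose (i + 1) * m.choose (j + 1) * ((i + 1) * (j + 1)) := by
      rw [← Nat.choose_succ_right_eq, ← Nat.choose_succ_right_eq]; ring

theorem stmt13_general (n l u a b : ℕ) (hua : u ≤ a)
    (hb : l + 1 - u ≤ b) (hn : a + b < n) :
    Nat.choose (n - l) (b - (l + 1 - u)) * Nat.choose (n - l) (a - u) <
      Nat.choose (n - l) (b - (l + 1 - u) + 1) * Nat.choose (n - l) (a - u + 1) :=
  Nat.choose_mul_choose_lt_choose_succ_mul_choose_succ (by omega)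

theorem stmt13 (n l u a b : ℕ) (hu : 1 ≤ u) (hul : u ≤ l) (hua : u ≤ a)
    (hb : l + 1 - u ≤ b) (hn : a + b < n) :
    Nat.choose (n - l) (b - (l + 1 - u)) * Nat.choose (n - l) (a - u) <
      Nat.choose (n - l) (b - (l + 1 - u) + 1) * Nat.choose (n - l) (a - u + 1) :=
  stmt13_general n l u a b hua hb hn
end

section
/- Let n, l, a, b be natural numbers with a ≥ 1, 1 ≤ l ≤ b, and n > a + b. Then C(n−l−1, b−l) · C(n−l, a−1) < C(n−l−1, a−1) · C(n−l, b−l+1). -/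
/-! Writing `m = n - l`, both sides share the factor `C(m-1, b-l) * C(m-1, a-1) * m`, since
`C(m, a-1) = C(m-1, a-1) * m / (m-a+1)` and `C(m, b-l+1) = C(m-1, b-l) * m / (b-l+1)`.
The inequality thus reduces to `b - l + 1 < m - (a - 1)`, i.e. to `a + b < n`. -/

theorem Nat.choose_mul_choose_succ_lt_choose_mul_choose_succ {p j k : ℕ} (h : j + k < p) :
    p.choose k * (p + 1).choose j < p.choose j * (p + 1).choose (k + 1) := by
  have hj : p.choose j * (p + 1) = (p + 1).choose j * (p + 1 - j) := Nat.choose_mul_succ_eq p j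
  have hk : (p + 1) * p.choose k = (p + 1).choose (k + 1) * (k + 1) := Nat.add_one_mul_choose_eq p k
  have hpos : 0 < p.choose k * p.choose j * (p + 1) :=
    Nat.mul_pos (Nat.mul_pos (Nat.choose_pos (by omega)) (Nat.choose_pos (by omega))) p.succ_pos
  refine Nat.lt_of_mul_lt_mul_right (a := (p + 1 - j) * (k + 1)) ?_
  calc p.choose k * (p + 1).choose j * ((p + 1 - j) * (k + 1))
      = p.choose k * ((p + 1).choose j * (p + 1 - j)) * (k + 1) := by ring
    _ = p.choose k * p.choose j * (p + 1) * (k + 1) := by rw [← hj]; ring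
    _ < p.choose k * p.choose j * (p + 1) * (p + 1 - j) :=
        Nat.mul_lt_mul_of_pos_left (by omega) hpos
    _ = p.choose j * ((p + 1).choose (k + 1) * (k + 1)) * (p + 1 - j) := by rw [← hk]; ring
    _ = p.choose j * (p + 1).choose (k + 1) * ((p + 1 - j) * (k + 1)) := by ring

theorem stmt14_general (n l a b : ℕ) (ha : 1 ≤ a) (hlb : l ≤ b) (hn : a + b < n) :
    Nat.choose (n - l - 1) (b - l) * Nat.choose (n - l) (a - 1) <
      Nat.choose (n - l - 1) (a - 1) * Nat.choose (n - l) (b - l + 1) := by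
  obtain ⟨p, hp⟩ : ∃ p, n - l = p + 1 := ⟨n - l - 1, by omega⟩
  rw [hp, Nat.add_sub_cancel]
  exact Nat.choose_mul_choose_succ_lt_choose_mul_choose_succ (by omega)

theorem stmt14 (n l a b : ℕ) (ha : 1 ≤ a) (hl : 1 ≤ l) (hlb : l ≤ b) (hn : a + b < n) :
    Nat.choose (n - l - 1) (b - l) * Nat.choose (n - l) (a - 1) <
      Nat.choose (n - l - 1) (a - 1) * Nat.choose (n - l) (b - l + 1) :=
  stmt14_general n l a b ha hlb hn
end
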